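/- arXiv:1603.09173 — 2 statements merged into one kernel-verified Lean document; each statement's English description precedes it below -/
import Mathlib

section
/- Let A be a finite nonempty set, X the simplex in ℝ^A, g a continuous field of symmetric positive-definite matrices on X, v : X → ℝ^A continuous, and for each y ∈ X let V(y) be the g(y)-projection of g(y)⁻¹ v(y) onto TC_X(y). Suppose f is continuously differentiable on an open set containing X with ∇f(y) = v(y) for all y ∈ X (a potential game). Then along every solution x(t) = x(0) + ∫₀ᵗ V(x(s)) ds, the function t ↦ f(x(t)) is nondecreasing, it is strictly increasing at times t where V(x(t)) ≠ 0, and dist(x(t), {y ∈ X : V(y) = 0}) → 0 as t → ∞. -/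
open Matrix Filter

noncomputable section

/-- The tangent cone `TC_X(x)` of the simplex at `x`. -/
def tcone {A : Type*} [Fintype A] (x : A → ℝ) : Set (A → ℝ) :=
  {z | (∑ α, z α) = 0 ∧ ∀ α, x α = 0 → 0 ≤ z α}

/-- The quadratic form `wᵀ G w = ‖w‖_G²` associated to a matrix `G`. -/
def qform {A : Type*} [Fintype A] (G : Matrix A A ℝ) (w : A → ℝ) : ℝ :=
  w ⬝ᵥ G.mulVec w

/-- `V` is the `G`-projection of `w` onto `C`. -/
def IsGProj {A : Type*} [Fintype A] (G : Matrix A A ℝ) (C : Set (A → ℝ))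
    (w V : A → ℝ) : Prop :=
  V ∈ C ∧ ∀ z ∈ C, qform G (w - V) ≤ qform G (w - z)

/-!
Along a solution, `d/dt f(x t) = v ⬝ᵥ V = ‖V‖²_g ≥ 0` almost everywhere: the
`g`-projection onto a cone is `g`-orthogonal to its residual. As `V` is bounded on the
simplex, `x` is Lipschitz, so `f ∘ x` is absolutely continuous and increases at rate
`v ⬝ᵥ V`. This rate is lower semicontinuous on the simplex (nearby tangent cones are
larger), hence bounded below by a positive constant on compact sets away from the rest
points; a bounded nondecreasing potential cannot absorb infinitely many increments of a
fixed size.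
-/

open Set Topology MeasureTheory
open scoped NNReal

section Projection

variable {A : Type*} [Fintype A]

lemma qform_smul (G : Matrix A A ℝ) (c : ℝ) (u : A → ℝ) :
    qform G (c • u) = c ^ 2 * qform G u := by
  simp only [qform, mulVec_smul, smul_dotProduct, dotProduct_smul, smul_eq_mul]
  ring

lemma smul_mem_tcone {y z : A → ℝ} {c : ℝ} (hc : 0 ≤ c) (hz : z ∈ tcone y) :
    c • z ∈ tcone y :=
  ⟨by simp [← Finset.mul_sum, hz.1], fun α hα => mul_nonneg hc (hz.2 α hα)⟩

lemma eventually_tcone_subset (y₀ : A → ℝ) : ∀ᶠ y in 𝓝 y₀, tcone y₀ ⊆ tcone y := by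
  have : ∀ᶠ y in 𝓝 y₀, ∀ α, y α = 0 → y₀ α = 0 := by
    refine eventually_all.2 fun α => ?_
    by_cases h : y₀ α = 0
    · exact Eventually.of_forall fun _ _ => h
    · filter_upwards [(continuous_apply α).continuousAt.eventually_ne h] with y hy
      exact fun h' => absurd h' hy
  filter_upwards [this] with y hy z hz
  exact ⟨hz.1, fun α hα => hz.2 α (hy α hα)⟩

variable [DecidableEq A] {G : Matrix A A ℝ} {C : Set (A → ℝ)} {v V : A → ℝ}

lemma Matrix.PosDef.qform_inv_mulVec_sub (hG : G.PosDef) (v z : A → ℝ) :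
    qform G (G⁻¹ *ᵥ v - z) = qform G (G⁻¹ *ᵥ v) - 2 * (v ⬝ᵥ z) + qform G z := by
  have hGt : Gᵀ = G := by
    simpa [conjTranspose_eq_transpose_of_trivial] using hG.isHermitian.eq
  have hGv : G *ᵥ (G⁻¹ *ᵥ v) = v := by
    rw [mulVec_mulVec, mul_nonsing_inv _ (isUnit_iff_ne_zero.2 hG.det_pos.ne'), one_mulVec]
  have hvG : (G⁻¹ *ᵥ v) ᵥ* G = v := by rw [← mulVec_transpose, hGt, hGv]
  simp only [qform, mulVec_sub, dotProduct_sub, sub_dotProduct, hGv]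
  rw [dotProduct_mulVec (G⁻¹ *ᵥ v), hvG, dotProduct_comm z v]
  ring

lemma IsGProj.two_dotProduct_sub_qform_le (hG : G.PosDef) (h : IsGProj G C (G⁻¹ *ᵥ v) V)
    {z : A → ℝ} (hz : z ∈ C) :
    2 * (v ⬝ᵥ z) - qform G z ≤ 2 * (v ⬝ᵥ V) - qform G V := by
  have := h.2 z hz
  rw [hG.qform_inv_mulVec_sub, hG.qform_inv_mulVec_sub] at this
  linarith

lemma IsGProj.dotProduct_eq_qform (hG : G.PosDef) (h : IsGProj G C (G⁻¹ *ᵥ v) V)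
    (hC : ∀ s : ℝ, 0 ≤ s → s • V ∈ C) : v ⬝ᵥ V = qform G V := by
  have hray : ∀ s : ℝ, 0 ≤ s →
      2 * s * (v ⬝ᵥ V) - s ^ 2 * qform G V ≤ 2 * (v ⬝ᵥ V) - qform G V := fun s hs => by
    simpa [qform_smul, dotProduct_smul, mul_assoc] using
      h.two_dotProduct_sub_qform_le hG (hC s hs)
  have hq : 0 ≤ qform G V := hG.posSemidef.dotProduct_mulVec_nonneg V
  have h0 := hray 0 le_rfl
  rcases hq.eq_or_lt with hq0 | hqpos
  · have h2 := hray 2 zero_le_two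
    rw [← hq0] at h0 h2 ⊢
    linarith
  · -- `s ↦ 2 s (v ⬝ᵥ V) - s² ‖V‖²_G` peaks at `s = (v ⬝ᵥ V) / ‖V‖²_G`
    have hs := hray (v ⬝ᵥ V / qform G V) (div_nonneg (by linarith) hqpos.le)
    field_simp at hs
    nlinarith [sq_nonneg (v ⬝ᵥ V - qform G V)]

lemma IsGProj.dotProduct_eq_qform_of_tcone {y : A → ℝ} (hG : G.PosDef)
    (h : IsGProj G (tcone y) (G⁻¹ *ᵥ v) V) : v ⬝ᵥ V = qform G V :=
  h.dotProduct_eq_qform hG fun _ hs => smul_mem_tcone hs h.1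

end Projection

section Compactness

variable {A : Type*} [Fintype A] {β : Type*} [TopologicalSpace β] {S : Set β}
  {g : β → Matrix A A ℝ}

lemma ContinuousOn.qform {u : β → A → ℝ} (hg : ContinuousOn g S) (hu : ContinuousOn u S) :
    ContinuousOn (fun y => qform (g y) (u y)) S := by
  unfold _root_.qform
  fun_prop

lemma exists_pos_mul_sq_norm_le_qform (hS : IsCompact S) (hg : ContinuousOn g S)
    (hpd : ∀ y ∈ S, (g y).PosDef) :
    ∃ μ : ℝ, 0 < μ ∧ ∀ y ∈ S, ∀ u, μ * ‖u‖ ^ 2 ≤ qform (g y) u := by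
  have hcont : ContinuousOn (fun p : β × (A → ℝ) => qform (g p.1) p.2)
      (S ×ˢ Metric.sphere 0 1) :=
    (hg.comp continuousOn_fst fun _ hp => hp.1).qform continuousOn_snd
  obtain ⟨μ, hμ, hμle⟩ := (hS.prod (isCompact_sphere 0 1)).exists_forall_le' hcont
    (a := 0) fun p hp => (hpd p.1 hp.1).dotProduct_mulVec_pos
      (ne_zero_of_mem_sphere one_ne_zero ⟨p.2, hp.2⟩)
  refine ⟨μ, hμ, fun y hy u => ?_⟩
  rcases eq_or_ne u 0 with rfl | hu
  · simp [qform]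
  have hnu : ‖u‖ ≠ 0 := norm_ne_zero_iff.2 hu
  have hunit : ‖u‖⁻¹ • u ∈ Metric.sphere (0 : A → ℝ) 1 := by
    simp [norm_smul, hnu]
  have := hμle (y, ‖u‖⁻¹ • u) ⟨hy, hunit⟩
  rw [qform_smul, inv_pow] at this
  rwa [le_inv_mul_iff₀ (by positivity), mul_comm] at this

lemma abs_dotProduct_le_card_mul (u w : A → ℝ) :
    |u ⬝ᵥ w| ≤ Fintype.card A * (‖u‖ * ‖w‖) := by
  calc |u ⬝ᵥ w| ≤ ∑ α, |u α * w α| := Finset.abs_sum_le_sum_abs _ _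
    _ ≤ ∑ _α : A, ‖u‖ * ‖w‖ := Finset.sum_le_sum fun α _ => by
        rw [abs_mul]
        exact mul_le_mul (norm_le_pi_norm u α) (norm_le_pi_norm w α) (abs_nonneg _)
          (norm_nonneg _)
    _ = Fintype.card A * (‖u‖ * ‖w‖) := by simp

lemma exists_norm_le_of_dotProduct_eq_qform (hS : IsCompact S) (hg : ContinuousOn g S)
    (hpd : ∀ y ∈ S, (g y).PosDef) {v V : β → A → ℝ} (hv : ContinuousOn v S)
    (hV : ∀ y ∈ S, v y ⬝ᵥ V y = qform (g y) (V y)) :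
    ∃ M : ℝ≥0, ∀ y ∈ S, ‖V y‖ ≤ M := by
  obtain ⟨μ, hμ, hμle⟩ := exists_pos_mul_sq_norm_le_qform hS hg hpd
  obtain ⟨B, hB⟩ := hS.exists_bound_of_continuousOn hv
  refine ⟨Real.toNNReal (Fintype.card A * B / μ), fun y hy => ?_⟩
  have hdot : μ * ‖V y‖ ^ 2 ≤ Fintype.card A * B * ‖V y‖ :=
    calc μ * ‖V y‖ ^ 2 ≤ v y ⬝ᵥ V y := (hV y hy).symm ▸ hμle y hy (V y)
      _ ≤ Fintype.card A * (‖v y‖ * ‖V y‖) :=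
        (le_abs_self _).trans (abs_dotProduct_le_card_mul _ _)
      _ ≤ Fintype.card A * B * ‖V y‖ := by
        rw [← mul_assoc]; gcongr; exact hB y hy
  refine le_trans ?_ (Real.le_coe_toNNReal _)
  rw [le_div_iff₀ hμ]
  rcases (norm_nonneg (V y)).eq_or_lt with h0 | hpos
  · rw [← h0, zero_mul]
    exact mul_nonneg (Nat.cast_nonneg _) ((norm_nonneg _).trans (hB y hy))
  · nlinarith

end Compactness

lemma lowerSemicontinuousOn_dotProduct_of_isGProj {A : Type*} [Fintype A] [DecidableEq A]
    {S : Set (A → ℝ)} {g : (A → ℝ) → Matrix A A ℝ} (hg : ContinuousOn g S)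
    (hpd : ∀ y ∈ S, (g y).PosDef) {v V : (A → ℝ) → A → ℝ} (hv : ContinuousOn v S)
    (hV : ∀ y ∈ S, IsGProj (g y) (tcone y) ((g y)⁻¹ *ᵥ v y) (V y)) :
    LowerSemicontinuousOn (fun y => v y ⬝ᵥ V y) S := by
  have hW : ∀ y ∈ S, v y ⬝ᵥ V y = qform (g y) (V y) := fun y hy =>
    (hV y hy).dotProduct_eq_qform_of_tcone (hpd y hy)
  intro y₀ hy₀ c hc
  -- `V y₀` is a competitor for the projection at every `y` near `y₀`
  set F : (A → ℝ) → ℝ := fun y => 2 * (v y ⬝ᵥ V y₀) - qform (g y) (V y₀)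
  have hF : ContinuousOn F S := by
    have := hg.qform (continuousOn_const (c := V y₀))
    fun_prop
  have hFy₀ : F y₀ = v y₀ ⬝ᵥ V y₀ := by simp only [F, ← hW y₀ hy₀]; ring
  filter_upwards [hF y₀ hy₀ (Ioi_mem_nhds (hFy₀.symm ▸ hc : c < F y₀)),
    nhdsWithin_le_nhds (eventually_tcone_subset y₀), self_mem_nhdsWithin] with y hFy hcone hy
  calc c < F y := hFy
    _ ≤ 2 * (v y ⬝ᵥ V y) - qform (g y) (V y) :=
      (hV y hy).two_dotProduct_sub_qform_le (hpd y hy) (hcone (hV y₀ hy₀).1)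
    _ = v y ⬝ᵥ V y := by rw [hW y hy]; ring

section Solutions

variable {E : Type*} [NormedAddCommGroup E] [NormedSpace ℝ E] {x w : ℝ → E}

lemma sub_eq_integral_of_eq_add_integral
    (hw : ∀ t, 0 ≤ t → IntervalIntegrable w volume 0 t)
    (hx : ∀ t, 0 ≤ t → x t = x 0 + ∫ s in 0..t, w s) {a b : ℝ} (ha : 0 ≤ a)
    (hb : 0 ≤ b) : x b - x a = ∫ s in a..b, w s := by
  rw [hx a ha, hx b hb, add_sub_add_left_eq_sub,
    intervalIntegral.integral_interval_sub_left (hw b hb) (hw a ha)]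

lemma lipschitzOnWith_of_eq_add_integral
    (hw : ∀ t, 0 ≤ t → IntervalIntegrable w volume 0 t)
    (hx : ∀ t, 0 ≤ t → x t = x 0 + ∫ s in 0..t, w s) {M : ℝ≥0}
    (hM : ∀ t, 0 ≤ t → ‖w t‖ ≤ M) :
    LipschitzOnWith M x (Ici 0) := by
  refine LipschitzOnWith.of_dist_le_mul fun b hb a ha => ?_
  rw [dist_eq_norm, sub_eq_integral_of_eq_add_integral hw hx ha hb, Real.dist_eq]
  exact intervalIntegral.norm_integral_le_of_norm_le_const fun s hs =>
    hM s (le_min ha hb |>.trans_lt hs.1).le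

lemma ae_hasDerivAt_of_eq_add_integral [CompleteSpace E]
    (hw : ∀ t, 0 ≤ t → IntervalIntegrable w volume 0 t)
    (hx : ∀ t, 0 ≤ t → x t = x 0 + ∫ s in 0..t, w s) :
    ∀ᵐ u, 0 < u → HasDerivAt x (w u) u := by
  have hn : ∀ n : ℕ, ∀ᵐ u, u ∈ uIcc 0 (n : ℝ) →
      HasDerivAt (fun t => ∫ s in 0..t, w s) (w u) u :=
    fun n => (hw n n.cast_nonneg).ae_hasDerivAt_integral.mono fun u hu hmem =>
      hu hmem 0 left_mem_uIcc
  filter_upwards [ae_all_iff.2 hn] with u hu hpos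
  obtain ⟨n, hn⟩ := exists_nat_gt u
  have hxu : x =ᶠ[𝓝 u] fun t => x 0 + ∫ s in 0..t, w s :=
    eventually_of_mem (Ioi_mem_nhds hpos) fun t ht => hx t (le_of_lt ht)
  have hun : u ∈ uIcc 0 (n : ℝ) := by rw [uIcc_of_le n.cast_nonneg]; exact ⟨hpos.le, hn.le⟩
  exact ((hu n hun).const_add _).congr_of_eventuallyEq hxu

end Solutions

lemma exists_lipschitzOnWith_of_hasFDerivAt {E : Type*} [NormedAddCommGroup E] [NormedSpace ℝ E]
    {s : Set E} (hs : Convex ℝ s) (hsc : IsCompact s) {f : E → ℝ} {f' : E → E →L[ℝ] ℝ}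
    (hf : ∀ y ∈ s, HasFDerivAt f (f' y) y) (hf' : ContinuousOn f' s) :
    ∃ K : ℝ≥0, LipschitzOnWith K f s := by
  obtain ⟨C, hC⟩ := hsc.exists_bound_of_continuousOn hf'
  exact ⟨C.toNNReal, hs.lipschitzOnWith_of_nnnorm_hasFDerivWithin_le
    (fun y hy => (hf y hy).hasFDerivWithinAt) fun y hy => by
      rw [← NNReal.coe_le_coe, coe_nnnorm]; exact (hC y hy).trans (Real.le_coe_toNNReal C)⟩

lemma AbsolutelyContinuousOnInterval.mul_sub_le_sub {φ φ' : ℝ → ℝ} {a b c : ℝ}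
    (hab : a ≤ b) (hφ : AbsolutelyContinuousOnInterval φ a b)
    (hφ' : ∀ᵐ u, u ∈ Icc a b → HasDerivAt φ (φ' u) u)
    (hc : ∀ u ∈ Icc a b, c ≤ φ' u) :
    c * (b - a) ≤ φ b - φ a := by
  rw [← hφ.integral_deriv_eq_sub]
  calc c * (b - a) = ∫ _ in a..b, c := by simp [mul_comm]
    _ ≤ ∫ u in a..b, deriv φ u :=
      intervalIntegral.integral_mono_ae_restrict hab intervalIntegrable_const
        hφ.intervalIntegrable_deriv <| (ae_restrict_iff' measurableSet_Icc).2 <|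
          hφ'.mono fun u hu hmem => (hu hmem).deriv ▸ hc u hmem

-- An integrated form of `r ≤ Φ'` on `[0, ∞)`, which needs no pointwise differentiability.
def IncreasesAtRate (Φ r : ℝ → ℝ) : Prop :=
  ∀ ⦃a b c : ℝ⦄, 0 ≤ a → a ≤ b → (∀ u ∈ Icc a b, c ≤ r u) →
    c * (b - a) ≤ Φ b - Φ a

lemma increasesAtRate_comp {E : Type*} [NormedAddCommGroup E] [NormedSpace ℝ E]
    {X : Set E} {f : E → ℝ} {f' : E → E →L[ℝ] ℝ} {Kf Kx : ℝ≥0} {x w : ℝ → E}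
    {r : ℝ → ℝ} (hf : ∀ y ∈ X, HasFDerivAt f (f' y) y) (hfX : LipschitzOnWith Kf f X)
    (hx : LipschitzOnWith Kx x (Ici 0)) (hxX : MapsTo x (Ici 0) X)
    (hx' : ∀ᵐ u, 0 < u → HasDerivAt x (w u) u)
    (hr : ∀ u, 0 ≤ u → r u ≤ f' (x u) (w u)) :
    IncreasesAtRate (fun t => f (x t)) r := by
  intro a b c ha hab hc
  have hsub : uIcc a b ⊆ Ici 0 := by rw [uIcc_of_le hab]; exact fun u hu => ha.trans hu.1
  refine ((hfX.comp hx hxX).mono hsub).absolutelyContinuousOnInterval.mul_sub_le_sub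
    (φ' := fun u => f' (x u) (w u)) hab ?_ fun u hu => (hc u hu).trans (hr u (ha.trans hu.1))
  filter_upwards [hx', Measure.ae_ne volume 0] with u hu hu0 hmem
  have hu0' : 0 ≤ u := ha.trans hmem.1
  exact (hf _ (hxX hu0')).comp_hasDerivAt u (hu (hu0'.lt_of_ne' hu0))

lemma LowerSemicontinuousOn.exists_forall_le' {α : Type*} [TopologicalSpace α] {s : Set α}
    {f : α → ℝ} (hf : LowerSemicontinuousOn f s) (hs : IsCompact s) {a : ℝ}
    (ha : ∀ y ∈ s, a < f y) : ∃ a', a < a' ∧ ∀ y ∈ s, a' ≤ f y := by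
  rcases s.eq_empty_or_nonempty with rfl | hne
  · exact ⟨a + 1, by linarith, by simp⟩
  · obtain ⟨y₀, hy₀, hmin⟩ := hf.exists_isMinOn hne hs
    exact ⟨f y₀, ha y₀ hy₀, hmin⟩

namespace IncreasesAtRate

variable {Φ r : ℝ → ℝ}

lemma monotoneOn (hΦ : IncreasesAtRate Φ r) (hr : ∀ u, 0 ≤ u → 0 ≤ r u) :
    MonotoneOn Φ (Ici 0) := fun a ha _ _ hab => by
  simpa using hΦ ha hab (c := 0) fun u hu => hr u (le_trans ha hu.1)

lemma lt_of_pos (hΦ : IncreasesAtRate Φ r) (hmono : MonotoneOn Φ (Ici 0)) {t t' : ℝ}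
    (ht : 0 ≤ t) (hr : LowerSemicontinuousWithinAt r (Ici 0) t) (hpos : 0 < r t)
    (htt' : t < t') : Φ t < Φ t' := by
  have hnear : ∀ᶠ u in 𝓝[≥] t, r t / 2 < r u :=
    nhdsWithin_mono _ (Ici_subset_Ici.2 ht) (hr _ (half_lt_self hpos))
  obtain ⟨s, hts, hs⟩ := mem_nhdsGE_iff_exists_Icc_subset.1 hnear
  set b := min s t'
  have htb : t < b := lt_min hts htt'
  have hinc := hΦ ht htb.le fun u hu => (hs ⟨hu.1, hu.2.trans (min_le_left _ _)⟩).le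
  have hbt' := hmono (ht.trans htb.le) (ht.trans htt'.le) (min_le_right s t')
  linarith [mul_pos (half_pos hpos) (sub_pos.2 htb)]

lemma tendsto_infDist {E : Type*} [PseudoMetricSpace E] {X Z : Set E} {W : E → ℝ}
    {x : ℝ → E} {K : ℝ≥0} (hΦ : IncreasesAtRate Φ (W ∘ x))
    (hmono : MonotoneOn Φ (Ici 0)) (hbdd : BddAbove (Φ '' Ici 0)) (hX : IsCompact X)
    (hW : LowerSemicontinuousOn W X)
    (hWpos : ∀ y ∈ X, y ∉ Z → 0 < W y) (hx : LipschitzOnWith K x (Ici 0))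
    (hxX : MapsTo x (Ici 0) X) :
    Tendsto (fun t => Metric.infDist (x t) Z) atTop (𝓝 0) := by
  refine tendsto_order.2 ⟨fun a ha => Eventually.of_forall fun t =>
    ha.trans_le Metric.infDist_nonneg, fun ε hε => ?_⟩
  set Xε := {y ∈ X | ε / 2 ≤ Metric.infDist y Z}
  have hXε : IsCompact Xε :=
    hX.inter_right (isClosed_le continuous_const (Metric.continuous_infDist_pt Z))
  obtain ⟨c, hc, hcW⟩ := (hW.mono (sep_subset _ _)).exists_forall_le' hXε fun y hy =>
    hWpos y hy.1 fun hyZ => by linarith [hy.2, Metric.infDist_zero_of_mem hyZ]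
  -- starting `ε`-far from `Z`, the Lipschitz trajectory stays in `Xε` for a time `δ`
  set δ := ε / (2 * (K + 1))
  have hδ : 0 < δ := by positivity
  have hKδ : K * δ ≤ ε / 2 :=
    calc K * δ ≤ (K + 1) * δ := by gcongr; linarith
      _ = ε / 2 := by simp only [δ]; field_simp
  have hfar : ∀ t, 0 ≤ t → ε ≤ Metric.infDist (x t) Z →
      Φ t + c * δ ≤ Φ (t + δ) := by
    intro t ht hεt
    have hinc := hΦ ht (le_add_of_nonneg_right hδ.le) fun u hu =>
      hcW (x u) ⟨hxX (ht.trans hu.1), ?_⟩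
    · rw [add_sub_cancel_left] at hinc
      linarith
    · have hd := hx.dist_le_mul t ht u (ht.trans hu.1)
      rw [Real.dist_eq, abs_sub_comm, abs_of_nonneg (by linarith [hu.1])] at hd
      have hKu : K * (u - t) ≤ K * δ := by gcongr; linarith [hu.2]
      linarith [Metric.infDist_le_infDist_add_dist (s := Z) (x := x t) (y := x u)]
  obtain ⟨_, ⟨t₀, ht₀, rfl⟩, hlt⟩ := exists_lt_of_lt_csSup (nonempty_Ici.image Φ)
    (sub_lt_self (sSup (Φ '' Ici 0)) (mul_pos hc hδ))
  filter_upwards [eventually_ge_atTop t₀] with t ht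
  by_contra! hεt
  have ht0 : 0 ≤ t := le_trans ht₀ ht
  have := le_csSup hbdd (mem_image_of_mem Φ (mem_Ici.2 (by linarith) : t + δ ∈ Ici 0))
  linarith [hfar t ht0 hεt, hmono ht₀ ht0 ht]

end IncreasesAtRate

theorem stmt_6_general {A : Type*} [Fintype A] [DecidableEq A]
    (g : (A → ℝ) → Matrix A A ℝ) (hgcont : ContinuousOn g (stdSimplex ℝ A))
    (hgpd : ∀ y ∈ stdSimplex ℝ A, (g y).PosDef)
    (v : (A → ℝ) → (A → ℝ)) (hvcont : ContinuousOn v (stdSimplex ℝ A))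
    (V : (A → ℝ) → (A → ℝ))
    (hV : ∀ y ∈ stdSimplex ℝ A, IsGProj (g y) (tcone y) ((g y)⁻¹.mulVec (v y)) (V y))
    (f : (A → ℝ) → ℝ) (U : Set (A → ℝ)) (hXU : stdSimplex ℝ A ⊆ U)
    (f' : (A → ℝ) → ((A → ℝ) →L[ℝ] ℝ))
    (hf' : ∀ y ∈ U, HasFDerivAt f (f' y) y) (hf'cont : ContinuousOn f' U)
    (hpot : ∀ y ∈ stdSimplex ℝ A, ∀ z : A → ℝ, f' y z = v y ⬝ᵥ z)
    (x : ℝ → (A → ℝ)) (hxX : ∀ t : ℝ, 0 ≤ t → x t ∈ stdSimplex ℝ A)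
    (hloc : ∀ t : ℝ, 0 ≤ t → IntervalIntegrable (fun s => V (x s)) MeasureTheory.volume 0 t)
    (hsol : ∀ t : ℝ, 0 ≤ t → x t = x 0 + ∫ s in (0:ℝ)..t, V (x s)) :
    (∀ s t : ℝ, 0 ≤ s → s ≤ t → f (x s) ≤ f (x t)) ∧
    (∀ t : ℝ, 0 ≤ t → V (x t) ≠ 0 → ∀ t' : ℝ, t < t' → f (x t) < f (x t')) ∧
    Tendsto (fun t => Metric.infDist (x t) {y ∈ stdSimplex ℝ A | V y = 0})
      atTop (nhds 0) := by
  set X := stdSimplex ℝ A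
  have hW : ∀ y ∈ X, v y ⬝ᵥ V y = qform (g y) (V y) := fun y hy =>
    (hV y hy).dotProduct_eq_qform_of_tcone (hgpd y hy)
  have hWpos : ∀ y ∈ X, V y ≠ 0 → 0 < v y ⬝ᵥ V y := fun y hy h =>
    hW y hy ▸ (hgpd y hy).dotProduct_mulVec_pos h
  have hWnn : ∀ y ∈ X, 0 ≤ v y ⬝ᵥ V y := fun y hy =>
    hW y hy ▸ (hgpd y hy).posSemidef.dotProduct_mulVec_nonneg (V y)
  have hf : ∀ y ∈ X, HasFDerivAt f (f' y) y := fun y hy => hf' y (hXU hy)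
  obtain ⟨M, hM⟩ := exists_norm_le_of_dotProduct_eq_qform (isCompact_stdSimplex ℝ A) hgcont
    hgpd hvcont hW
  obtain ⟨Kf, hfK⟩ := exists_lipschitzOnWith_of_hasFDerivAt (convex_stdSimplex ℝ A)
    (isCompact_stdSimplex ℝ A) hf (hf'cont.mono hXU)
  have hxK : LipschitzOnWith M x (Ici 0) :=
    lipschitzOnWith_of_eq_add_integral hloc hsol fun t ht => hM _ (hxX t ht)
  have hΦ : IncreasesAtRate (fun t => f (x t)) (fun t => v (x t) ⬝ᵥ V (x t)) :=
    increasesAtRate_comp hf hfK hxK hxX (ae_hasDerivAt_of_eq_add_integral hloc hsol)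
      fun u hu => (hpot _ (hxX u hu) _).ge
  have hmono := hΦ.monotoneOn fun u hu => hWnn _ (hxX u hu)
  have hlsc := lowerSemicontinuousOn_dotProduct_of_isGProj hgcont hgpd hvcont hV
  have hbdd : BddAbove ((fun t => f (x t)) '' Ici 0) :=
    (isCompact_stdSimplex ℝ A).bddAbove_image hfK.continuousOn |>.mono
      (image_image f x _ ▸ image_mono (MapsTo.image_subset hxX))
  refine ⟨fun s t hs hst => hmono hs (hs.trans hst) hst,
    fun t ht hVt t' htt' => hΦ.lt_of_pos hmono ht ?_ (hWpos _ (hxX t ht) hVt) htt', ?_⟩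
  · exact (hlsc _ (hxX t ht)).comp (hxK.continuousOn t ht) hxX
  · exact hΦ.tendsto_infDist (W := fun y => v y ⬝ᵥ V y) hmono hbdd
      (isCompact_stdSimplex ℝ A) hlsc (fun y hy hyZ => hWpos y hy fun h => hyZ ⟨hy, h⟩)
      hxK hxX

/-- global convergence in potential games.  For Riemannian game dynamics
`V(y) = Π_{TC_X(y)}^{g(y)}(g(y)⁻¹ v(y))` generated by a potential game (`∇f = v` on the
simplex, `f` being `C¹` on an open neighborhood of the simplex), along every Carathéodory
solution the potential `f(x(t))` is nondecreasing, strictly increases after any time where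
`V(x(t)) ≠ 0`, and `x(t)` converges to the set of rest points `{V = 0}`. -/
theorem stmt_6 {A : Type*} [Fintype A] [DecidableEq A] [Nonempty A]
    (g : (A → ℝ) → Matrix A A ℝ) (hgcont : ContinuousOn g (stdSimplex ℝ A))
    (hgpd : ∀ y ∈ stdSimplex ℝ A, (g y).PosDef)
    (v : (A → ℝ) → (A → ℝ)) (hvcont : ContinuousOn v (stdSimplex ℝ A))
    (V : (A → ℝ) → (A → ℝ))
    (hV : ∀ y ∈ stdSimplex ℝ A, IsGProj (g y) (tcone y) ((g y)⁻¹.mulVec (v y)) (V y))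
    (f : (A → ℝ) → ℝ) (U : Set (A → ℝ)) (hU : IsOpen U) (hXU : stdSimplex ℝ A ⊆ U)
    (f' : (A → ℝ) → ((A → ℝ) →L[ℝ] ℝ))
    (hf' : ∀ y ∈ U, HasFDerivAt f (f' y) y) (hf'cont : ContinuousOn f' U)
    (hpot : ∀ y ∈ stdSimplex ℝ A, ∀ z : A → ℝ, f' y z = v y ⬝ᵥ z)
    (x : ℝ → (A → ℝ)) (hxX : ∀ t : ℝ, 0 ≤ t → x t ∈ stdSimplex ℝ A)
    (hxcont : ContinuousOn x (Set.Ici 0))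
    (hloc : ∀ t : ℝ, 0 ≤ t → IntervalIntegrable (fun s => V (x s)) MeasureTheory.volume 0 t)
    (hsol : ∀ t : ℝ, 0 ≤ t → x t = x 0 + ∫ s in (0:ℝ)..t, V (x s)) :
    (∀ s t : ℝ, 0 ≤ s → s ≤ t → f (x s) ≤ f (x t)) ∧
    (∀ t : ℝ, 0 ≤ t → V (x t) ≠ 0 → ∀ t' : ℝ, t < t' → f (x t) < f (x t')) ∧
    Tendsto (fun t => Metric.infDist (x t) {y ∈ stdSimplex ℝ A | V y = 0})
      atTop (nhds 0) :=
  stmt_6_general g hgcont hgpd v hvcont V hV f U hXU f' hf' hf'cont hpot x hxX hloc hsol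
end
end

section
/- Let A be a finite nonempty set, X the simplex in ℝ^A, v : X → ℝ^A continuous, and x* ∈ X a GESS of v. Let h be twice continuously differentiable on an open set containing X, with Hessian H(y) positive definite for every y ∈ X, and for each y ∈ X let V(y) be the H(y)-projection of H(y)⁻¹ v(y) onto TC_X(y) (discontinuous Hessian dynamics). Then along every solution x(t) = x(0) + ∫₀ᵗ V(x(s)) ds, the function t ↦ D_h(x*, x(t)) is nonincreasing and x(t) → x* as t → ∞. -/
/-
The Bregman divergence `D(y) = D_h(x*, y)` is a Lyapunov function. Its derivative at `y` in
direction `V(y)` is `-⟪V(y), x* - y⟫_{H(y)}`; since `x* - y` lies in the tangent cone and `V(y)`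
is the `H(y)`-projection of `H(y)⁻¹ v(y)` onto that cone, the variational inequality of the
projection bounds it by `v(y) · (y - x*)`, which is `≤ 0` and vanishes only at `x*` (GESS).
A solution is only absolutely continuous, so the chain rule is used almost everywhere and
integrated with the fundamental theorem of calculus for absolutely continuous functions.
Positive definiteness of the Hessian makes `D` positive away from `x*`, and compactness of the
simplex turns "`D` decreases at a rate bounded away from zero while far from `x*`" into
convergence.
-/

open Matrix Filter

noncomputable section

/-- The Hessian matrix of `h` at `y`. -/
def hessMat {A : Type*} [Fintype A] [DecidableEq A] (h : (A → ℝ) → ℝ) (y : A → ℝ) :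
    Matrix A A ℝ :=
  Matrix.of fun α β => fderiv ℝ (fderiv ℝ h) y (Pi.single α 1) (Pi.single β 1)

open Set MeasureTheory
open scoped NNReal Topology

section Projection

variable {A : Type*} [Fintype A]

theorem Matrix.IsHermitian.dotProduct_mulVec_comm {G : Matrix A A ℝ} (hG : G.IsHermitian)
    (a b : A → ℝ) : a ⬝ᵥ G *ᵥ b = b ⬝ᵥ G *ᵥ a := by
  rw [dotProduct_mulVec, ← mulVec_transpose, ← conjTranspose_eq_transpose_of_trivial, hG.eq,
    dotProduct_comm]

theorem qform_sub_smul {G : Matrix A A ℝ} (hG : G.IsHermitian) (p d : A → ℝ) (t : ℝ) :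
    qform G (p - t • d) = qform G p - 2 * t * (p ⬝ᵥ G *ᵥ d) + t ^ 2 * qform G d := by
  simp only [qform, mulVec_sub, mulVec_smul, dotProduct_sub, sub_dotProduct, dotProduct_smul,
    smul_dotProduct, smul_eq_mul, hG.dotProduct_mulVec_comm d p]
  ring

theorem IsGProj.dotProduct_mulVec_sub_nonpos {G : Matrix A A ℝ} (hG : G.IsHermitian)
    {C : Set (A → ℝ)} (hC : Convex ℝ C) {w V z : A → ℝ} (hV : IsGProj G C w V) (hz : z ∈ C) :
    (w - V) ⬝ᵥ G *ᵥ (z - V) ≤ 0 := by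
  have hle : ∀ t ∈ Ioc (0 : ℝ) 1, (w - V) ⬝ᵥ G *ᵥ (z - V) ≤ t * (qform G (z - V) / 2) := by
    intro t ht
    have hmin := hV.2 _ (hC.add_smul_sub_mem hV.1 hz ⟨ht.1.le, ht.2⟩)
    rw [show w - (V + t • (z - V)) = (w - V) - t • (z - V) by abel, qform_sub_smul hG] at hmin
    nlinarith [ht.1]
  have hlim : Tendsto (fun t : ℝ => t * (qform G (z - V) / 2)) (𝓝[>] 0) (𝓝 0) :=
    ((continuous_id.mul continuous_const).tendsto' 0 0 (zero_mul _)).mono_left nhdsWithin_le_nhds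
  exact ge_of_tendsto hlim (eventually_of_mem (Ioc_mem_nhdsGT zero_lt_one) hle)

theorem IsGProj.dotProduct_mulVec_nonpos {G : Matrix A A ℝ} (hG : G.IsHermitian)
    {C : Set (A → ℝ)} (hC : Convex ℝ C) (hCadd : ∀ a ∈ C, ∀ b ∈ C, a + b ∈ C) {w V z : A → ℝ}
    (hV : IsGProj G C w V) (hz : z ∈ C) : (w - V) ⬝ᵥ G *ᵥ z ≤ 0 := by
  simpa using hV.dotProduct_mulVec_sub_nonpos hG hC (hCadd _ hV.1 _ hz)

theorem convex_tcone (y : A → ℝ) : Convex ℝ (tcone y) := by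
  intro a ha b hb s t hs ht _
  refine ⟨?_, fun α hα => ?_⟩
  · simp [Finset.sum_add_distrib, ← Finset.mul_sum, ha.1, hb.1]
  · have := ha.2 α hα
    have := hb.2 α hα
    simp only [Pi.add_apply, Pi.smul_apply, smul_eq_mul]
    positivity

theorem add_mem_tcone {y a b : A → ℝ} (ha : a ∈ tcone y) (hb : b ∈ tcone y) :
    a + b ∈ tcone y :=
  ⟨by simp [Finset.sum_add_distrib, ha.1, hb.1],
    fun α hα => add_nonneg (ha.2 α hα) (hb.2 α hα)⟩

theorem sub_mem_tcone {y z : A → ℝ} (hy : y ∈ stdSimplex ℝ A) (hz : z ∈ stdSimplex ℝ A) :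
    z - y ∈ tcone y :=
  ⟨by simp [Finset.sum_sub_distrib, hy.2, hz.2], fun α hα => by simpa [hα] using hz.1 α⟩

theorem dotProduct_sub_le_of_isGProj_tcone [DecidableEq A] {G : Matrix A A ℝ} (hG : G.PosDef)
    {u y z W : A → ℝ} (hy : y ∈ stdSimplex ℝ A) (hz : z ∈ stdSimplex ℝ A)
    (hW : IsGProj G (tcone y) (G⁻¹ *ᵥ u) W) : u ⬝ᵥ (z - y) ≤ W ⬝ᵥ G *ᵥ (z - y) := by
  have hinv : G⁻¹ *ᵥ u ⬝ᵥ G *ᵥ (z - y) = u ⬝ᵥ (z - y) := by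
    rw [hG.isHermitian.dotProduct_mulVec_comm, mulVec_mulVec,
      mul_nonsing_inv _ ((isUnit_iff_isUnit_det G).mp hG.isUnit), one_mulVec, dotProduct_comm]
  have := hW.dotProduct_mulVec_nonpos hG.isHermitian (convex_tcone y)
    (fun _ ha _ hb => add_mem_tcone ha hb) (sub_mem_tcone hy hz)
  rw [sub_dotProduct, hinv] at this
  linarith

end Projection

theorem sub_sub_pos_of_hasDerivAt_of_pos {φ φ' φ'' : ℝ → ℝ}
    (hφ : ∀ θ ∈ Icc (0 : ℝ) 1, HasDerivAt φ (φ' θ) θ)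
    (hφ' : ∀ θ ∈ Icc (0 : ℝ) 1, HasDerivAt φ' (φ'' θ) θ) (hpos : ∀ θ ∈ Ioo (0 : ℝ) 1, 0 < φ'' θ) :
    0 < φ 1 - φ 0 - φ' 0 := by
  obtain ⟨c, hc, hφc⟩ := exists_hasDerivAt_eq_slope φ φ' zero_lt_one
    (fun θ hθ => (hφ θ hθ).continuousAt.continuousWithinAt)
    (fun θ hθ => hφ θ (Ioo_subset_Icc_self hθ))
  have hc1 : Icc 0 c ⊆ Icc (0 : ℝ) 1 := Icc_subset_Icc_right hc.2.le
  obtain ⟨c', hc', hφ'c'⟩ := exists_hasDerivAt_eq_slope φ' φ'' hc.1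
    (fun θ hθ => (hφ' θ (hc1 hθ)).continuousAt.continuousWithinAt)
    (fun θ hθ => hφ' θ (hc1 (Ioo_subset_Icc_self hθ)))
  have hpos' := mul_pos (hpos c' ⟨hc'.1, hc'.2.trans hc.2⟩) hc.1
  rw [hφ'c', sub_zero, div_mul_cancel₀ _ hc.1.ne', hφc, sub_zero, div_one] at hpos'
  linarith

section Bregman

variable {E : Type*} [NormedAddCommGroup E] [NormedSpace ℝ E] {h : E → ℝ} {x y : E}

def bregman (h : E → ℝ) (x y : E) : ℝ :=
  h x - h y - fderiv ℝ h y (x - y)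

theorem bregman_self : bregman h x x = 0 := by
  simp [bregman]

theorem hasFDerivAt_bregman (hh : ContDiffAt ℝ 2 h y) :
    HasFDerivAt (bregman h x) (-(fderiv ℝ (fderiv ℝ h) y).flip (x - y)) y := by
  have hDh : HasFDerivAt h (fderiv ℝ h y) y :=
    (hh.differentiableAt (by norm_num)).hasFDerivAt
  have hD2h : HasFDerivAt (fderiv ℝ h) (fderiv ℝ (fderiv ℝ h) y) y :=
    ((hh.fderiv_right (m := 1) (by norm_num)).differentiableAt (by norm_num)).hasFDerivAt
  have := (hasFDerivAt_const (h x) y).sub hDh |>.sub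
    (hD2h.clm_apply ((hasFDerivAt_const x y).sub (hasFDerivAt_id y)))
  refine this.congr_fderiv ?_
  ext u
  simp

theorem contDiffOn_bregman {U : Set E} (hU : IsOpen U) (hh : ContDiffOn ℝ 2 h U) :
    ContDiffOn ℝ 1 (bregman h x) U :=
  ((contDiffOn_const.sub (hh.of_le (by norm_num))).sub
    ((hh.fderiv_of_isOpen hU (by norm_num)).clm_apply (contDiffOn_const.sub contDiffOn_id)))

theorem bregman_pos (hh : ∀ z ∈ segment ℝ y x, ContDiffAt ℝ 2 h z)
    (hpos : ∀ z ∈ openSegment ℝ y x, 0 < fderiv ℝ (fderiv ℝ h) z (x - y) (x - y)) :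
    0 < bregman h x y := by
  have hγ (θ : ℝ) : HasDerivAt (fun θ : ℝ => y + θ • (x - y)) (x - y) θ := by
    simpa using ((hasDerivAt_id θ).smul_const (x - y)).const_add y
  have hseg (θ : ℝ) (hθ : θ ∈ Icc (0 : ℝ) 1) : y + θ • (x - y) ∈ segment ℝ y x := by
    rw [segment_eq_image']; exact mem_image_of_mem _ hθ
  have hφ (θ : ℝ) (hθ : θ ∈ Icc (0 : ℝ) 1) : HasDerivAt (fun θ : ℝ => h (y + θ • (x - y)))
      (fderiv ℝ h (y + θ • (x - y)) (x - y)) θ :=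
    ((hh _ (hseg θ hθ)).differentiableAt (by norm_num)).hasFDerivAt.comp_hasDerivAt θ (hγ θ)
  have hφ' (θ : ℝ) (hθ : θ ∈ Icc (0 : ℝ) 1) :
      HasDerivAt (fun θ : ℝ => fderiv ℝ h (y + θ • (x - y)) (x - y))
        (fderiv ℝ (fderiv ℝ h) (y + θ • (x - y)) (x - y) (x - y)) θ := by
    have hD2h := (((hh _ (hseg θ hθ)).fderiv_right (m := 1) (by norm_num)).differentiableAt
      (by norm_num)).hasFDerivAt.comp_hasDerivAt θ (hγ θ)
    simpa using hD2h.clm_apply (hasDerivAt_const θ (x - y))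
  have := sub_sub_pos_of_hasDerivAt_of_pos hφ hφ' fun θ hθ => hpos _ <| by
    rw [openSegment_eq_image']; exact mem_image_of_mem _ hθ
  simpa [bregman] using this

end Bregman

theorem AbsolutelyContinuousOnInterval.of_dist_le_mul {X : Type*} [PseudoMetricSpace X]
    {f : ℝ → X} {F : ℝ → ℝ} {a b : ℝ} {K : ℝ≥0} (hF : AbsolutelyContinuousOnInterval F a b)
    (hle : ∀ s ∈ uIcc a b, ∀ t ∈ uIcc a b, dist (f s) (f t) ≤ K * dist (F s) (F t)) :
    AbsolutelyContinuousOnInterval f a b := by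
  have hKF := (show Tendsto _ _ _ from hF).const_mul (K : ℝ)
  rw [mul_zero] at hKF
  refine squeeze_zero' (Eventually.of_forall fun _ => Finset.sum_nonneg fun _ _ => dist_nonneg)
    ?_ hKF
  filter_upwards [mem_inf_of_right (mem_principal_self _)] with E hE
  rw [Finset.mul_sum]
  exact Finset.sum_le_sum fun i hi => hle _ (hE.1 i hi).1 _ (hE.1 i hi).2

theorem AbsolutelyContinuousOnInterval.sub_le_integral_of_ae_deriv_le {φ f : ℝ → ℝ} {a b : ℝ}
    (hφ : AbsolutelyContinuousOnInterval φ a b) (hab : a ≤ b)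
    (hf : IntervalIntegrable f volume a b) (hle : ∀ᵐ u, u ∈ Icc a b → deriv φ u ≤ f u) :
    φ b - φ a ≤ ∫ u in a..b, f u := by
  rw [← hφ.integral_deriv_eq_sub]
  exact intervalIntegral.integral_mono_ae_restrict hab hφ.intervalIntegrable_deriv hf
    ((ae_restrict_iff' measurableSet_Icc).2 hle)

section Primitive

variable {E : Type*} [NormedAddCommGroup E] [NormedSpace ℝ E]
  {W : ℝ → E} {a b : ℝ}

theorem LipschitzOnWith.absolutelyContinuousOnInterval_comp_primitive {g : E → ℝ} {S : Set E}
    {K : ℝ≥0} (hg : LipschitzOnWith K g S) (hW : IntervalIntegrable W volume a b) (y₀ : E)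
    (hS : ∀ u ∈ uIcc a b, y₀ + ∫ r in a..u, W r ∈ S) :
    AbsolutelyContinuousOnInterval (fun u => g (y₀ + ∫ r in a..u, W r)) a b := by
  refine (hW.norm.absolutelyContinuousOnInterval_intervalIntegral left_mem_uIcc).of_dist_le_mul
    (K := K) fun s hs t ht => (hg.dist_le_mul _ (hS s hs) _ (hS t ht)).trans ?_
  have hWs := hW.mono_set (uIcc_subset_uIcc_left hs)
  have hWt := hW.mono_set (uIcc_subset_uIcc_left ht)
  gcongr
  rw [dist_add_left, dist_eq_norm, Real.dist_eq,
    intervalIntegral.integral_interval_sub_left hWs hWt,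
    intervalIntegral.integral_interval_sub_left hWs.norm hWt.norm]
  exact intervalIntegral.norm_integral_le_abs_integral_norm

theorem sub_le_integral_of_hasFDerivAt_comp_primitive [CompleteSpace E] {g : E → ℝ}
    {g' : E → E →L[ℝ] ℝ} {S : Set E} {K : ℝ≥0} (hgK : LipschitzOnWith K g S)
    (hg' : ∀ y ∈ S, HasFDerivAt g (g' y) y) {f : ℝ → ℝ} (hab : a ≤ b) (hW : IntervalIntegrable W volume a b)
    (hf : IntervalIntegrable f volume a b) (y₀ : E)
    (hS : ∀ u ∈ Icc a b, y₀ + ∫ r in a..u, W r ∈ S)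
    (hle : ∀ u ∈ Icc a b, g' (y₀ + ∫ r in a..u, W r) (W u) ≤ f u) :
    g (y₀ + ∫ r in a..b, W r) - g y₀ ≤ ∫ u in a..b, f u := by
  rw [← uIcc_of_le hab] at hS hle
  have hAC := hgK.absolutelyContinuousOnInterval_comp_primitive hW y₀ hS
  simpa using hAC.sub_le_integral_of_ae_deriv_le hab hf <| by
    filter_upwards [hW.ae_hasDerivAt_integral] with u hu hmem
    rw [← uIcc_of_le hab] at hmem
    have hγ := (hu hmem a left_mem_uIcc).const_add y₀
    have hgγ : HasDerivAt (fun u => g (y₀ + ∫ r in a..u, W r)) _ u :=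
      (hg' _ (hS u hmem)).comp_hasDerivAt u hγ
    rw [hgγ.deriv]
    exact hle u hmem

theorem sub_le_integral_of_hasFDerivAt_of_eq_add_integral [CompleteSpace E] {g : E → ℝ}
    {g' : E → E →L[ℝ] ℝ} {S : Set E} {K : ℝ≥0} (hgK : LipschitzOnWith K g S)
    (hg' : ∀ y ∈ S, HasFDerivAt g (g' y) y) {x : ℝ → E} (hxS : ∀ t, 0 ≤ t → x t ∈ S)
    (hW : ∀ t, 0 ≤ t → IntervalIntegrable W volume 0 t)
    (hx : ∀ t, 0 ≤ t → x t = x 0 + ∫ r in (0 : ℝ)..t, W r) {f : ℝ → ℝ} {s t : ℝ} (hs : 0 ≤ s)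
    (hst : s ≤ t) (hf : IntervalIntegrable f volume s t)
    (hle : ∀ u ∈ Icc s t, g' (x u) (W u) ≤ f u) :
    g (x t) - g (x s) ≤ ∫ u in s..t, f u := by
  have hxs (u : ℝ) (hu : s ≤ u) : x s + ∫ r in s..u, W r = x u := by
    rw [← intervalIntegral.integral_interval_sub_left (hW u (hs.trans hu)) (hW s hs),
      hx u (hs.trans hu), hx s hs]
    abel
  have := sub_le_integral_of_hasFDerivAt_comp_primitive hgK hg' hst
    ((hW s hs).symm.trans (hW t (hs.trans hst))) hf (x s)
    (fun u hu => hxs u hu.1 ▸ hxS u (hs.trans hu.1))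
    fun u hu => by rw [hxs u hu.1]; exact hle u hu
  rwa [hxs t hst] at this

end Primitive

section Lyapunov

variable {X : Type*} {S : Set X} {x₀ : X} {x : ℝ → X} {g ψ : X → ℝ}

theorem antitoneOn_of_sub_le_integral (hψ : ∀ y ∈ S, ψ y ≤ 0) (hxS : ∀ t, 0 ≤ t → x t ∈ S)
    (hdecr : ∀ s t, 0 ≤ s → s ≤ t → g (x t) - g (x s) ≤ ∫ u in s..t, ψ (x u)) :
    AntitoneOn (fun t => g (x t)) (Ici 0) := by
  intro s hs t _ hst
  have := intervalIntegral.integral_nonneg (μ := volume) hst (f := fun u => -ψ (x u))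
    fun u hu => neg_nonneg.2 (hψ _ (hxS u ((mem_Ici.1 hs).trans hu.1)))
  rw [intervalIntegral.integral_neg] at this
  linarith [hdecr s t hs hst]

variable [MetricSpace X]

theorem isCompact_inter_le_dist (hS : IsCompact S) (r : ℝ) :
    IsCompact (S ∩ {y | r ≤ dist y x₀}) :=
  hS.inter_right (isClosed_le continuous_const (continuous_id.dist continuous_const))

theorem exists_dist_lt_of_sub_le_integral (hS : IsCompact S) (hψ : ContinuousOn ψ S)
    (hψneg : ∀ y ∈ S, y ≠ x₀ → ψ y < 0) (hxS : ∀ t, 0 ≤ t → x t ∈ S)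
    (hx : ContinuousOn x (Ici 0)) (hg : ∀ y ∈ S, 0 ≤ g y)
    (hdecr : ∀ t, 0 ≤ t → g (x t) - g (x 0) ≤ ∫ u in (0 : ℝ)..t, ψ (x u)) {δ : ℝ} (hδ : 0 < δ) :
    ∃ T, 0 ≤ T ∧ dist (x T) x₀ < δ := by
  by_contra! hfar
  obtain ⟨y₁, hy₁, hmax⟩ := (isCompact_inter_le_dist hS δ).exists_isMaxOn
    ⟨x 0, hxS 0 le_rfl, hfar 0 le_rfl⟩ (hψ.mono inter_subset_left)
  have hψy₁ : ψ y₁ < 0 := hψneg y₁ hy₁.1 (dist_pos.1 (hδ.trans_le hy₁.2))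
  have hlin (t : ℝ) (ht : 0 ≤ t) : g (x t) - g (x 0) ≤ t * ψ y₁ := by
    refine (hdecr t ht).trans ?_
    have hψx : ContinuousOn (fun u => ψ (x u)) (Icc 0 t) :=
      hψ.comp (hx.mono Icc_subset_Ici_self) fun u hu => hxS u hu.1
    simpa using intervalIntegral.integral_mono_on ht (hψx.intervalIntegrable_of_Icc ht)
      (intervalIntegrable_const (μ := volume)) fun u hu => hmax ⟨hxS u hu.1, hfar u hu.1⟩
  -- at this time the linear decrease would have made `g` negative
  have hT : 0 ≤ (g (x 0) + 1) / -ψ y₁ :=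
    div_nonneg (by linarith [hg _ (hxS 0 le_rfl)]) (by linarith)
  have := hlin _ hT
  rw [div_neg, neg_mul, div_mul_cancel₀ _ hψy₁.ne] at this
  linarith [hg _ (hxS _ hT)]

theorem tendsto_of_sub_le_integral (hS : IsCompact S) (hg : ContinuousOn g S) (hx₀ : x₀ ∈ S)
    (hg₀ : g x₀ = 0) (hgpos : ∀ y ∈ S, y ≠ x₀ → 0 < g y) (hψ : ContinuousOn ψ S)
    (hψle : ∀ y ∈ S, ψ y ≤ 0) (hψneg : ∀ y ∈ S, y ≠ x₀ → ψ y < 0)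
    (hxS : ∀ t, 0 ≤ t → x t ∈ S) (hx : ContinuousOn x (Ici 0))
    (hdecr : ∀ s t, 0 ≤ s → s ≤ t → g (x t) - g (x s) ≤ ∫ u in s..t, ψ (x u)) :
    Tendsto x atTop (𝓝 x₀) := by
  have hgnonneg (y : X) (hy : y ∈ S) : 0 ≤ g y := by
    rcases eq_or_ne y x₀ with rfl | hne
    exacts [hg₀.ge, (hgpos y hy hne).le]
  rw [Metric.tendsto_atTop]
  intro ε hε
  by_cases hK : (S ∩ {y | ε ≤ dist y x₀}).Nonempty
  · obtain ⟨y₁, hy₁, hmin⟩ := (isCompact_inter_le_dist hS ε).exists_isMinOn hK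
      (hg.mono inter_subset_left)
    have hβ : 0 < g y₁ := hgpos y₁ hy₁.1 (dist_pos.1 (hε.trans_le hy₁.2))
    obtain ⟨δ, hδ, hgδ⟩ := Metric.continuousWithinAt_iff.mp (hg x₀ hx₀) _ hβ
    obtain ⟨T, hT, hxT⟩ := exists_dist_lt_of_sub_le_integral hS hψ hψneg hxS hx hgnonneg
      (fun t ht => hdecr 0 t le_rfl ht) hδ
    refine ⟨T, fun t ht => ?_⟩
    by_contra! hfar
    have hgT : g (x T) < g y₁ := by
      have := hgδ (hxS T hT) hxT
      rw [Real.dist_eq, hg₀, sub_zero] at this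
      exact (le_abs_self _).trans_lt this
    have hgt : g y₁ ≤ g (x t) := hmin ⟨hxS t (hT.trans ht), hfar⟩
    linarith [antitoneOn_of_sub_le_integral hψle hxS hdecr (mem_Ici.2 hT)
      (mem_Ici.2 (hT.trans ht)) ht]
  · exact ⟨0, fun t ht => not_le.1 fun hfar => hK ⟨x t, hxS t ht, hfar⟩⟩

end Lyapunov

section Simplex

variable {A : Type*} [Fintype A] [DecidableEq A] {h : (A → ℝ) → ℝ}

theorem hessMat_dotProduct (h : (A → ℝ) → ℝ) (y w u : A → ℝ) :
    fderiv ℝ (fderiv ℝ h) y w u = w ⬝ᵥ hessMat h y *ᵥ u := by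
  have := Matrix.toLinearMap₂'_apply'
    (LinearMap.toMatrix₂' ℝ (fderiv ℝ (fderiv ℝ h) y).toLinearMap₁₂) w u
  rwa [Matrix.toLinearMap₂'_toMatrix'] at this

theorem neg_fderiv_fderiv_flip_apply_le_of_isGProj {u y z W : A → ℝ} (hpd : (hessMat h y).PosDef)
    (hy : y ∈ stdSimplex ℝ A) (hz : z ∈ stdSimplex ℝ A)
    (hW : IsGProj (hessMat h y) (tcone y) ((hessMat h y)⁻¹ *ᵥ u) W) :
    -(fderiv ℝ (fderiv ℝ h) y).flip (z - y) W ≤ u ⬝ᵥ (y - z) := by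
  have := dotProduct_sub_le_of_isGProj_tcone hpd hy hz hW
  simp only [ContinuousLinearMap.flip_apply, hessMat_dotProduct]
  rw [← neg_sub z y, dotProduct_neg]
  linarith

theorem bregman_pos_of_posDef {S : Set (A → ℝ)} (hS : Convex ℝ S)
    (hh : ∀ y ∈ S, ContDiffAt ℝ 2 h y) (hpd : ∀ y ∈ S, (hessMat h y).PosDef) {x y : A → ℝ}
    (hx : x ∈ S) (hy : y ∈ S) (hne : y ≠ x) : 0 < bregman h x y := by
  have hseg := hS.segment_subset hy hx
  refine bregman_pos (fun z hz => hh z (hseg hz)) fun z hz => ?_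
  rw [hessMat_dotProduct]
  exact (hpd z (hseg (openSegment_subset_segment _ _ _ hz))).dotProduct_mulVec_pos
    (sub_ne_zero.2 hne.symm)

end Simplex

theorem stmt_9_general {A : Type*} [Fintype A] [DecidableEq A]
    (v : (A → ℝ) → (A → ℝ)) (hvcont : ContinuousOn v (stdSimplex ℝ A))
    (xstar : A → ℝ) (hxstarX : xstar ∈ stdSimplex ℝ A)
    (hGESS : ∀ y ∈ stdSimplex ℝ A,
      v y ⬝ᵥ (y - xstar) ≤ 0 ∧ (v y ⬝ᵥ (y - xstar) = 0 → y = xstar))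
    (h : (A → ℝ) → ℝ) (U : Set (A → ℝ)) (hU : IsOpen U) (hXU : stdSimplex ℝ A ⊆ U)
    (hh : ContDiffOn ℝ 2 h U)
    (hpd : ∀ y ∈ stdSimplex ℝ A, (hessMat h y).PosDef)
    (V : (A → ℝ) → (A → ℝ))
    (hV : ∀ y ∈ stdSimplex ℝ A,
      IsGProj (hessMat h y) (tcone y) ((hessMat h y)⁻¹.mulVec (v y)) (V y))
    (x : ℝ → (A → ℝ)) (hxX : ∀ t : ℝ, 0 ≤ t → x t ∈ stdSimplex ℝ A)
    (hxcont : ContinuousOn x (Set.Ici 0))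
    (hloc : ∀ t : ℝ, 0 ≤ t → IntervalIntegrable (fun s => V (x s)) MeasureTheory.volume 0 t)
    (hsol : ∀ t : ℝ, 0 ≤ t → x t = x 0 + ∫ s in (0:ℝ)..t, V (x s)) :
    (∀ s t : ℝ, 0 ≤ s → s ≤ t →
      h xstar - h (x t) - fderiv ℝ h (x t) (xstar - x t) ≤
        h xstar - h (x s) - fderiv ℝ h (x s) (xstar - x s)) ∧
    Tendsto (fun t => x t) atTop (nhds xstar) := by
  set S := stdSimplex ℝ A
  set ψ : (A → ℝ) → ℝ := fun y => v y ⬝ᵥ (y - xstar)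
  have hS : IsCompact S := isCompact_stdSimplex ℝ A
  have hh2 (y : A → ℝ) (hy : y ∈ S) : ContDiffAt ℝ 2 h y := hh.contDiffAt (hU.mem_nhds (hXU hy))
  have hψ : ContinuousOn ψ S := (continuous_fst.dotProduct continuous_snd).comp_continuousOn
    (hvcont.prodMk (continuousOn_id.sub continuousOn_const))
  have hψneg (y : A → ℝ) (hy : y ∈ S) (hne : y ≠ xstar) : ψ y < 0 :=
    (hGESS y hy).1.lt_of_ne fun h0 => hne ((hGESS y hy).2 h0)
  obtain ⟨K, hK⟩ := ((contDiffOn_bregman hU hh).mono hXU).exists_lipschitzOnWith one_ne_zero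
    (convex_stdSimplex ℝ A) hS
  have hdecr (s t : ℝ) (hs : 0 ≤ s) (hst : s ≤ t) :
      bregman h xstar (x t) - bregman h xstar (x s) ≤ ∫ u in s..t, ψ (x u) := by
    have hxS (u : ℝ) (hu : u ∈ Icc s t) : x u ∈ S := hxX u (hs.trans hu.1)
    refine sub_le_integral_of_hasFDerivAt_of_eq_add_integral hK
      (fun y hy => hasFDerivAt_bregman (hh2 y hy)) hxX hloc hsol hs hst ?_ fun u hu =>
        neg_fderiv_fderiv_flip_apply_le_of_isGProj (hpd _ (hxS u hu)) (hxS u hu) hxstarX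
          (hV _ (hxS u hu))
    exact (hψ.comp (hxcont.mono fun u hu => hs.trans hu.1) hxS).intervalIntegrable_of_Icc hst
  have hψle (y : A → ℝ) (hy : y ∈ S) : ψ y ≤ 0 := (hGESS y hy).1
  exact ⟨fun s t hs hst => antitoneOn_of_sub_le_integral hψle hxX hdecr hs (hs.trans hst) hst,
    tendsto_of_sub_le_integral hS ((contDiffOn_bregman hU hh).continuousOn.mono hXU) hxstarX
      bregman_self (fun y hy hne => bregman_pos_of_posDef (convex_stdSimplex ℝ A) hh2 hpd hxstarX
        hy hne) hψ hψle hψneg hxX hxcont hdecr⟩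

/-- global asymptotic stability of a GESS under discontinuous Hessian dynamics.
Along every Carathéodory solution of `ẋ = V(x)`, where `V(y)` is the `H(y)`-projection of
`H(y)⁻¹ v(y)` onto `TC_X(y)` and `H = Hess h` is positive definite on the simplex, the
Bregman divergence `D_h(x*, x(t))` is nonincreasing and `x(t) → x*`. -/
theorem stmt_9 {A : Type*} [Fintype A] [DecidableEq A] [Nonempty A]
    (v : (A → ℝ) → (A → ℝ)) (hvcont : ContinuousOn v (stdSimplex ℝ A))
    (xstar : A → ℝ) (hxstarX : xstar ∈ stdSimplex ℝ A)
    (hGESS : ∀ y ∈ stdSimplex ℝ A,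
      v y ⬝ᵥ (y - xstar) ≤ 0 ∧ (v y ⬝ᵥ (y - xstar) = 0 → y = xstar))
    (h : (A → ℝ) → ℝ) (U : Set (A → ℝ)) (hU : IsOpen U) (hXU : stdSimplex ℝ A ⊆ U)
    (hh : ContDiffOn ℝ 2 h U)
    (hpd : ∀ y ∈ stdSimplex ℝ A, (hessMat h y).PosDef)
    (V : (A → ℝ) → (A → ℝ))
    (hV : ∀ y ∈ stdSimplex ℝ A,
      IsGProj (hessMat h y) (tcone y) ((hessMat h y)⁻¹.mulVec (v y)) (V y))
    (x : ℝ → (A → ℝ)) (hxX : ∀ t : ℝ, 0 ≤ t → x t ∈ stdSimplex ℝ A)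
    (hxcont : ContinuousOn x (Set.Ici 0))
    (hloc : ∀ t : ℝ, 0 ≤ t → IntervalIntegrable (fun s => V (x s)) MeasureTheory.volume 0 t)
    (hsol : ∀ t : ℝ, 0 ≤ t → x t = x 0 + ∫ s in (0:ℝ)..t, V (x s)) :
    (∀ s t : ℝ, 0 ≤ s → s ≤ t →
      h xstar - h (x t) - fderiv ℝ h (x t) (xstar - x t) ≤
        h xstar - h (x s) - fderiv ℝ h (x s) (xstar - x s)) ∧
    Tendsto (fun t => x t) atTop (nhds xstar) :=
  stmt_9_general v hvcont xstar hxstarX hGESS h U hU hXU hh hpd V hV x hxX hxcont hloc hsol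
end
end
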